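/- Let Φ be a completely positive linear map between matrix algebras. Then Φ(A) + Φ(K)* Φ(A)⁻¹ Φ(K) ≤ Φ(A + K* A⁻¹ K) for A positive definite with Φ(A) positive definite and arbitrary K. -/

import Mathlib

open Matrix
open scoped ComplexOrder Classical

/-- Square root of a positive semidefinite matrix, extended by `0`. -/
noncomputable def msqrt {n : Type*} [Fintype n] [DecidableEq n] (A : Matrix n n ℂ) :
    Matrix n n ℂ :=
  if h : A.PosSemidef then
      (h.1.eigenvectorUnitary : Matrix n n ℂ) * diagonal ((↑) ∘ Real.sqrt ∘ h.1.eigenvalues : n → ℂ) *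
        (star h.1.eigenvectorUnitary : Matrix n n ℂ)
    else 0

/-- Real power of a Hermitian matrix via the functional calculus, extended by `0`. -/
noncomputable def mrpow {n : Type*} [Fintype n] [DecidableEq n] (A : Matrix n n ℂ) (α : ℝ) :
    Matrix n n ℂ :=
  if h : A.IsHermitian then h.cfc (fun t => t ^ α) else 0

/-- A completely positive linear map between matrix algebras (Choi–Kraus form). -/
def IsCPMap {n m : Type*} [Fintype n] [Fintype m] (Φ : Matrix n n ℂ → Matrix m m ℂ) : Prop :=
  ∃ (r : ℕ) (C : Fin r → Matrix n m ℂ), ∀ X, Φ X = ∑ i, (C i)ᴴ * X * C i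

/-- The matrix geometric mean `A^{1/2} (A^{-1/2} B A^{-1/2})^{1/2} A^{1/2}`. -/
noncomputable def geomMean {n : Type*} [Fintype n] [DecidableEq n] (A B : Matrix n n ℂ) :
    Matrix n n ℂ :=
  msqrt A * msqrt ((msqrt A)⁻¹ * B * (msqrt A)⁻¹) * msqrt A

/-- The weighted geometric mean `B^{1/2} (B^{-1/2} A B^{-1/2})^α B^{1/2}`. -/
noncomputable def wgeomMean {n : Type*} [Fintype n] [DecidableEq n] (α : ℝ)
    (A B : Matrix n n ℂ) : Matrix n n ℂ :=
  msqrt B * mrpow ((msqrt B)⁻¹ * A * (msqrt B)⁻¹) α * msqrt B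

/-- The harmonic mean `2 (A⁻¹ + B⁻¹)⁻¹`. -/
noncomputable def harmMean {n : Type*} [Fintype n] [DecidableEq n] (A B : Matrix n n ℂ) :
    Matrix n n ℂ :=
  (2 : ℂ) • (A⁻¹ + B⁻¹)⁻¹

/-! The block matrix `[A, K; Kᴴ, Kᴴ A⁻¹ K]` is positive semidefinite, its Schur complement being
zero. A completely positive map is in particular `2`-positive, so applying `Φ` blockwise keeps it
positive semidefinite, and the Schur complement of `Φ A` in the image is exactly the difference
`Φ (Kᴴ A⁻¹ K) - Φ(K)ᴴ Φ(A)⁻¹ Φ(K)`. -/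

theorem Matrix.PosDef.posSemidef_fromBlocks_schur {R : Type*} [Field R] [PartialOrder R]
    [StarRing R] [StarOrderedRing R] {m n : Type*} [Fintype m] [DecidableEq m] [Fintype n]
    {A : Matrix m m R} (hA : A.PosDef) (K : Matrix m n R) :
    (fromBlocks A K Kᴴ (Kᴴ * A⁻¹ * K)).PosSemidef := by
  have := hA.isUnit.invertible
  rw [PosDef.fromBlocks₁₁ _ _ hA, sub_self]
  exact PosSemidef.zero

namespace IsCPMap

variable {n m : Type*} [Fintype n] [Fintype m] {Φ : Matrix n n ℂ → Matrix m m ℂ}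

theorem map_add (hΦ : IsCPMap Φ) (X Y : Matrix n n ℂ) : Φ (X + Y) = Φ X + Φ Y := by
  obtain ⟨r, C, hC⟩ := hΦ
  simp only [hC, Matrix.mul_add, Matrix.add_mul, Finset.sum_add_distrib]

theorem map_conjTranspose (hΦ : IsCPMap Φ) (X : Matrix n n ℂ) : Φ Xᴴ = (Φ X)ᴴ := by
  obtain ⟨r, C, hC⟩ := hΦ
  simp only [hC, conjTranspose_sum, conjTranspose_mul, conjTranspose_conjTranspose,
    Matrix.mul_assoc]

theorem posSemidef_fromBlocks (hΦ : IsCPMap Φ) {A B C D : Matrix n n ℂ}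
    (h : (fromBlocks A B C D).PosSemidef) :
    (fromBlocks (Φ A) (Φ B) (Φ C) (Φ D)).PosSemidef := by
  obtain ⟨r, V, hV⟩ := hΦ
  have hblocks : fromBlocks (Φ A) (Φ B) (Φ C) (Φ D) =
      ∑ i, (fromBlocks (V i) 0 0 (V i))ᴴ * fromBlocks A B C D * fromBlocks (V i) 0 0 (V i) := by
    ext (i | i) (j | j) <;>
      simp [hV, fromBlocks_conjTranspose, fromBlocks_multiply, Matrix.sum_apply]
  rw [hblocks]
  exact posSemidef_sum _ fun i _ => h.conjTranspose_mul_mul_same _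

end IsCPMap

/-- `Φ(A) + Φ(K)* Φ(A)⁻¹ Φ(K) ≤ Φ(A + K* A⁻¹ K)` for a completely positive map `Φ`. -/
theorem cp_lieb_ruskai_strengthened {n m : Type*} [Fintype n] [DecidableEq n]
    [Fintype m] [DecidableEq m]
    (Φ : Matrix n n ℂ → Matrix m m ℂ) (hΦ : IsCPMap Φ)
    (A K : Matrix n n ℂ) (hA : A.PosDef) (hΦA : (Φ A).PosDef) :
    (Φ (A + Kᴴ * A⁻¹ * K) - (Φ A + (Φ K)ᴴ * (Φ A)⁻¹ * Φ K)).PosSemidef := by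
  have hblocks := hΦ.posSemidef_fromBlocks (hA.posSemidef_fromBlocks_schur K)
  rw [hΦ.map_conjTranspose] at hblocks
  have := hΦA.isUnit.invertible
  rw [hΦ.map_add, add_sub_add_left_eq_sub]
  exact (PosDef.fromBlocks₁₁ _ _ hΦA).mp hblocks
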